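/- arXiv:0812.2473 — 2 statements merged into one kernel-verified Lean document; each statement's English description precedes it below -/
import Mathlib

section
/- Monotonicity of the activated random walk graphical construction: suppose (X',F') ⪯ (X,F), i.e. X' is obtained from X by deleting some particles and changing the types of some remaining particles from B (active) to A (passive), and F' is obtained from F by inserting sleep instructions. If for some label sequence N ∈ 𝒩_m the sequence N·X under F stabilizes, then for every label sequence N' ∈ 𝒩_{m'} (m' = number of particles of X') the sequence N'·X' under F' also stabilizes, and for every site z ∈ ℤ the number of jump instructions of F' opened at z along the primed evolution is at most the number of jump instructions of F opened at z along the unprimed evolution, i.e. R'_z ≤ R_z. -/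
/-- A state of the activated random walk graphical construction with `m` particles on `ℤ`:
positions, types (`true` = B = active, `false` = A = passive) and envelope counters. -/
structure ARWState (m : ℕ) where
  pos : Fin m → ℤ
  typ : Fin m → Bool
  cnt : ℤ → ℕ

/-- An envelope configuration takes values in `{-1, 0, 1}`:
`±1` is a jump instruction, `0` a sleep instruction. -/
def ValidEnvelopes (F : ℤ → ℕ → ℤ) : Prop :=
  ∀ z j, F z j = -1 ∨ F z j = 0 ∨ F z j = 1

/-- The action `n · X` of a label `n` on a state `X`. -/
def arwStep {m : ℕ} (F : ℤ → ℕ → ℤ) (n : Fin m) (X : ARWState m) : ARWState m :=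
  if X.typ n = false then X
  else
    let z := X.pos n
    let instr := F z (X.cnt z)
    let cnt' : ℤ → ℕ := fun w => if w = z then X.cnt w + 1 else X.cnt w
    if instr = 0 then
      { pos := X.pos
        typ := fun k =>
          if k = n then (if ∃ l, l ≠ n ∧ X.pos l = z then true else false) else X.typ k
        cnt := cnt' }
    else
      let pos' : Fin m → ℤ := fun k => if k = n then z + instr else X.pos k
      { pos := pos'
        typ := fun k => if pos' k = z + instr then true else X.typ k
        cnt := cnt' }

/-- The evolution `N · X`: `X₀ = X`, `X_{k+1} = n_{k+1} · X_k`. -/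
def arwEvolve {m : ℕ} (F : ℤ → ℕ → ℤ) (N : ℕ → Fin m) (X : ARWState m) : ℕ → ARWState m
  | 0 => X
  | k + 1 => arwStep F (N k) (arwEvolve F N X k)

/-- `N · X` stabilizes at `X'`: eventually the sequence is constantly `X'`,
and every particle of `X'` is passive. -/
def StabilizesAt {m : ℕ} (F : ℤ → ℕ → ℤ) (N : ℕ → Fin m) (X X' : ARWState m) : Prop :=
  (∃ k₀, ∀ k, k₀ ≤ k → arwEvolve F N X k = X') ∧ ∀ n, X'.typ n = false

/-- `𝒩_m`: label sequences in which every label occurs infinitely often. -/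
def FairSeq {m : ℕ} (N : ℕ → Fin m) : Prop :=
  ∀ n : Fin m, ∀ k : ℕ, ∃ k', k ≤ k' ∧ N k' = n

/-- Number of jump instructions among the first `c` envelopes at site `z`. -/
def jumpCount (F : ℤ → ℕ → ℤ) (z : ℤ) (c : ℕ) : ℕ :=
  ((Finset.range c).filter (fun j => F z j ≠ 0)).card

/-!
Forgetting labels, a state becomes the numbers of active and of all particles at each site
together with the envelope counters, and a step of an active particle becomes a toppling of its
site. Topplings of distinct active sites commute, which yields the least action principle: a
legal toppling word uses each site at most as often as any legal word that stabilizes.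

The primed evolution is simulated by unprimed topplings: when the primed system opens envelope
`φ z j` at `z`, the unprimed one topples `z` and opens its envelope `j`; inserted sleep
instructions are ignored. Along the simulation the unprimed configuration has at least as many
(active) particles at every site. By the least action principle the simulating words are bounded
by the stabilizing unprimed one, so the primed counters are bounded at the finitely many sites where
primed particles can be active. Hence only finitely many primed steps are effective, fairness makes
the primed evolution stabilize, and `φ` matches its jumps with unprimed ones.
-/

/-- Unlabelled ARW configurations: `active z` and `total z` count the active and all particles
at `z`, and `cnt z` the envelopes opened at `z`. -/
@[ext]
structure ARWConfig where
  active : ℤ → ℕ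
  total : ℤ → ℕ
  cnt : ℤ → ℕ

namespace ARWConfig

variable {F : ℤ → ℕ → ℤ} {Y : ARWConfig} {y z s : ℤ}

def Valid (Y : ARWConfig) : Prop := ∀ z, Y.active z ≤ Y.total z

/-- The image of a step of an active particle at `z`: on a sleep instruction it falls asleep
if it is alone, on a jump to `z + d` every particle at `z + d` becomes active. -/
def topple (F : ℤ → ℕ → ℤ) (z : ℤ) (Y : ARWConfig) : ARWConfig :=
  if Y.active z = 0 then Y
  else
    let d := F z (Y.cnt z)
    let cnt : ℤ → ℕ := fun w => if w = z then Y.cnt z + 1 else Y.cnt w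
    if d = 0 then
      { Y with active := fun w => if w = z ∧ Y.total z = 1 then 0 else Y.active w, cnt }
    else
      { active := fun w =>
          if w = z + d then Y.total w + 1 else if w = z then Y.active z - 1 else Y.active w
        total := fun w =>
          if w = z + d then Y.total w + 1 else if w = z then Y.total z - 1 else Y.total w
        cnt }

theorem topple_of_active_eq_zero (h : Y.active z = 0) : Y.topple F z = Y := by
  simp [topple, h]

theorem topple_active (h : Y.active z ≠ 0) (w : ℤ) :
    (Y.topple F z).active w =
      if F z (Y.cnt z) = 0 then (if w = z ∧ Y.total z = 1 then 0 else Y.active w)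
      else if w = z + F z (Y.cnt z) then Y.total w + 1
      else if w = z then Y.active z - 1 else Y.active w := by
  by_cases h0 : F z (Y.cnt z) = 0 <;> simp [topple, h, h0]

theorem topple_total (h : Y.active z ≠ 0) (w : ℤ) :
    (Y.topple F z).total w =
      if F z (Y.cnt z) = 0 then Y.total w
      else if w = z + F z (Y.cnt z) then Y.total w + 1
      else if w = z then Y.total z - 1 else Y.total w := by
  by_cases h0 : F z (Y.cnt z) = 0 <;> simp [topple, h, h0]

theorem topple_cnt (h : Y.active z ≠ 0) (w : ℤ) :
    (Y.topple F z).cnt w = if w = z then Y.cnt z + 1 else Y.cnt w := by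
  by_cases h0 : F z (Y.cnt z) = 0 <;> simp [topple, h, h0]

theorem Valid.topple (hY : Y.Valid) : (Y.topple F z).Valid := by
  intro w
  by_cases ha : Y.active z = 0
  · rw [topple_of_active_eq_zero ha]; exact hY w
  rw [topple_active ha, topple_total ha]
  have := hY w; have := hY z
  split_ifs <;> omega

theorem active_le_topple_of_ne (hY : Y.Valid) (h : s ≠ z) :
    Y.active s ≤ (Y.topple F z).active s := by
  by_cases ha : Y.active z = 0
  · rw [topple_of_active_eq_zero ha]
  rw [topple_active ha]
  have := hY s
  split_ifs <;> omega

set_option maxHeartbeats 800000 in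
theorem topple_comm (hY : Y.Valid) (hyz : y ≠ z) (hy : Y.active y ≠ 0) (hz : Y.active z ≠ 0) :
    (Y.topple F y).topple F z = (Y.topple F z).topple F y := by
  have hz' : (Y.topple F y).active z ≠ 0 := by
    have := active_le_topple_of_ne (F := F) hY hyz.symm; omega
  have hy' : (Y.topple F z).active y ≠ 0 := by
    have := active_le_topple_of_ne (F := F) hY hyz; omega
  have := hY y; have := hY z
  have := hY (y + F y (Y.cnt y)); have := hY (z + F z (Y.cnt z))
  ext w
  · have := hY w
    simp only [topple_active hz', topple_active hy', topple_active hy, topple_active hz,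
      topple_total hy, topple_total hz, topple_cnt hy, topple_cnt hz]
    clear hz' hy' hY
    split_ifs <;> omega
  · have := hY w
    simp only [topple_total hz', topple_total hy', topple_total hy, topple_total hz,
      topple_cnt hy, topple_cnt hz]
    clear hz' hy' hY
    split_ifs <;> omega
  · simp only [topple_cnt hz', topple_cnt hy', topple_cnt hy, topple_cnt hz]
    split_ifs <;> omega

def toppleList (F : ℤ → ℕ → ℤ) (w : List ℤ) (Y : ARWConfig) : ARWConfig :=
  w.foldl (fun Y z => Y.topple F z) Y

@[simp]
theorem toppleList_nil : Y.toppleList F [] = Y := rfl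

@[simp]
theorem toppleList_cons (w : List ℤ) : Y.toppleList F (z :: w) = (Y.topple F z).toppleList F w :=
  rfl

theorem toppleList_append (w₁ w₂ : List ℤ) :
    Y.toppleList F (w₁ ++ w₂) = (Y.toppleList F w₁).toppleList F w₂ :=
  List.foldl_append

def IsLegal (F : ℤ → ℕ → ℤ) : List ℤ → ARWConfig → Prop
  | [], _ => True
  | z :: w, Y => Y.active z ≠ 0 ∧ IsLegal F w (Y.topple F z)

theorem isLegal_append {w₁ w₂ : List ℤ} :
    IsLegal F (w₁ ++ w₂) Y ↔ IsLegal F w₁ Y ∧ IsLegal F w₂ (Y.toppleList F w₁) := by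
  induction w₁ generalizing Y with
  | nil => simp [IsLegal]
  | cons z w ih => simp [IsLegal, ih, and_assoc]

theorem cnt_toppleList {w : List ℤ} (hw : IsLegal F w Y) (s : ℤ) :
    (Y.toppleList F w).cnt s = Y.cnt s + w.count s := by
  induction w generalizing Y with
  | nil => simp
  | cons z w ih =>
    rw [toppleList_cons, ih hw.2, topple_cnt hw.1, List.count_cons]
    by_cases hs : s = z <;> simp [hs] <;> omega

theorem active_le_toppleList_of_notMem (hY : Y.Valid) {w : List ℤ} (hs : s ∉ w) :
    Y.active s ≤ (Y.toppleList F w).active s := by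
  induction w generalizing Y with
  | nil => exact le_rfl
  | cons z w ih =>
    rw [List.mem_cons, not_or] at hs
    exact (active_le_topple_of_ne hY hs.1).trans (ih hY.topple hs.2)

theorem isLegal_topple_and_toppleList_comm (hY : Y.Valid) (hz : Y.active z ≠ 0)
    {w : List ℤ} (hzw : z ∉ w) (hw : IsLegal F w Y) :
    IsLegal F w (Y.topple F z) ∧
      (Y.topple F z).toppleList F w = (Y.toppleList F w).topple F z := by
  induction w generalizing Y with
  | nil => exact ⟨trivial, rfl⟩
  | cons y w ih =>
    rw [List.mem_cons, not_or] at hzw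
    obtain ⟨hy, hw⟩ := hw
    have hcomm := topple_comm (F := F) hY (Ne.symm hzw.1) hy hz
    have hz' : (Y.topple F y).active z ≠ 0 := by
      have := active_le_topple_of_ne (F := F) hY hzw.1; omega
    obtain ⟨ihw, iheq⟩ := ih hY.topple hz' hzw.2 hw
    refine ⟨⟨?_, hcomm ▸ ihw⟩, ?_⟩
    · have := active_le_topple_of_ne (F := F) (z := z) hY (Ne.symm hzw.1); omega
    · rw [toppleList_cons, toppleList_cons, ← hcomm, iheq]

/-- The least action principle: the first letter `z` of `v` occurs in `w`, since toppling other
sites never deactivates `z`, and its first occurrence commutes to the front of `w`. -/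
theorem subperm_of_isLegal (hY : Y.Valid) {v w : List ℤ} (hw : IsLegal F w Y)
    (hstab : ∀ s, (Y.toppleList F w).active s = 0) (hv : IsLegal F v Y) : v.Subperm w := by
  induction v generalizing Y w with
  | nil => exact List.nil_subperm
  | cons z v ih =>
    obtain ⟨hz, hv⟩ := hv
    have hzw : z ∈ w := by
      by_contra hzw
      have := active_le_toppleList_of_notMem (F := F) hY hzw
      have := hstab z; omega
    obtain ⟨w₁, w₂, rfl, hzw₁⟩ := List.eq_append_cons_of_mem hzw
    rw [isLegal_append] at hw
    obtain ⟨hw₁, hw₂⟩ := hw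
    obtain ⟨hw₁', heq⟩ := isLegal_topple_and_toppleList_comm hY hz hzw₁ hw₁
    have hw' : IsLegal F (w₁ ++ w₂) (Y.topple F z) := isLegal_append.2 ⟨hw₁', heq ▸ hw₂.2⟩
    have hstab' : ∀ s, ((Y.topple F z).toppleList F (w₁ ++ w₂)).active s = 0 := by
      simpa [toppleList_append, heq] using hstab
    exact ((List.subperm_cons z).2 (ih hY.topple hw' hstab' hv)).trans List.perm_middle.symm.subperm

theorem cnt_toppleList_le_of_isLegal (hY : Y.Valid) {v w : List ℤ} (hw : IsLegal F w Y)
    (hstab : ∀ s, (Y.toppleList F w).active s = 0) (hv : IsLegal F v Y) (s : ℤ) :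
    (Y.toppleList F v).cnt s ≤ (Y.toppleList F w).cnt s := by
  rw [cnt_toppleList hv, cnt_toppleList hw]
  exact Nat.add_le_add_left ((subperm_of_isLegal hY hw hstab hv).count_le s) _

theorem mem_of_isLegal_of_active_ne_zero (hY : Y.Valid) {v w : List ℤ} {s : ℤ}
    (hw : IsLegal F w Y) (hstab : ∀ s, (Y.toppleList F w).active s = 0) (hv : IsLegal F v Y)
    (hs : (Y.toppleList F v).active s ≠ 0) : s ∈ w := by
  have hvs : IsLegal F (v ++ [s]) Y := isLegal_append.2 ⟨hv, hs, trivial⟩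
  exact (subperm_of_isLegal hY hw hstab hvs).subset (by simp)

end ARWConfig

open Finset

theorem Finset.card_filter_add_ite_eq_card_filter_add_ite {α : Type*} [Fintype α]
    [DecidableEq α] {p q : α → Prop} [DecidablePred p] [DecidablePred q] (a : α)
    (h : ∀ b ≠ a, p b ↔ q b) :
    #{b | p b} + (if q a then 1 else 0) = #{b | q b} + (if p a then 1 else 0) := by
  simp only [card_filter, ← add_sum_erase _ _ (mem_univ a)]
  rw [sum_congr rfl fun b hb => if_congr (h b (ne_of_mem_erase hb)) rfl rfl]
  ring

namespace ARWState

variable {m : ℕ} {F : ℤ → ℕ → ℤ} {X : ARWState m} {n : Fin m}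

@[simps]
def toConfig (X : ARWState m) : ARWConfig where
  active z := #{k | X.pos k = z ∧ X.typ k = true}
  total z := #{k | X.pos k = z}
  cnt := X.cnt

theorem toConfig_valid (X : ARWState m) : X.toConfig.Valid := fun _ => by
  simp only [toConfig_active, toConfig_total]
  exact card_le_card (monotone_filter_right _ fun _ _ h => h.1)

theorem toConfig_active_ne_zero (h : X.typ n = true) : X.toConfig.active (X.pos n) ≠ 0 := by
  simp only [toConfig_active]
  exact card_ne_zero_of_mem (a := n) (by simp [h])

theorem arwStep_of_typ_false (h : X.typ n = false) : arwStep F n X = X := by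
  simp [arwStep, h]

theorem one_lt_total_iff (X : ARWState m) (n : Fin m) :
    1 < X.toConfig.total (X.pos n) ↔ ∃ l ≠ n, X.pos l = X.pos n := by
  have key := card_filter_add_ite_eq_card_filter_add_ite n
    (p := fun l => X.pos l = X.pos n) (q := fun l => X.pos l = X.pos n ∧ l ≠ n)
    fun b hb => by simp [hb]
  simp only [ne_eq, not_true_eq_false, and_false, if_false, if_true, add_zero] at key
  rw [toConfig_total, key, Nat.lt_add_left_iff_pos, card_pos, filter_nonempty_iff]
  simp [and_comm]

theorem total_add_ite_eq {X' : ARWState m} (hpos : ∀ k ≠ n, X'.pos k = X.pos k) (w : ℤ) :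
    X'.toConfig.total w + (if X.pos n = w then 1 else 0) =
      X.toConfig.total w + (if X'.pos n = w then 1 else 0) :=
  card_filter_add_ite_eq_card_filter_add_ite (p := fun k => X'.pos k = w)
    (q := fun k => X.pos k = w) n fun k hk => by rw [hpos k hk]

theorem active_add_ite_eq {X' : ARWState m} {w : ℤ}
    (h : ∀ k ≠ n, X'.pos k = w ∧ X'.typ k = true ↔ X.pos k = w ∧ X.typ k = true) :
    X'.toConfig.active w + (if X.pos n = w ∧ X.typ n = true then 1 else 0) =
      X.toConfig.active w + (if X'.pos n = w ∧ X'.typ n = true then 1 else 0) :=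
  card_filter_add_ite_eq_card_filter_add_ite (p := fun k => X'.pos k = w ∧ X'.typ k = true)
    (q := fun k => X.pos k = w ∧ X.typ k = true) n h

theorem arwStep_cnt (h : X.typ n = true) (w : ℤ) :
    (arwStep F n X).cnt w = if w = X.pos n then X.cnt (X.pos n) + 1 else X.cnt w := by
  by_cases h0 : F (X.pos n) (X.cnt (X.pos n)) = 0 <;>
  · simp only [arwStep, h, h0, Bool.true_eq_false, if_false, if_true]
    split_ifs with hw <;> simp [hw]

theorem arwStep_pos_of_eq_zero (h : X.typ n = true) (h0 : F (X.pos n) (X.cnt (X.pos n)) = 0) :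
    (arwStep F n X).pos = X.pos := by
  simp [arwStep, h, h0]

theorem arwStep_typ_of_eq_zero (h : X.typ n = true) (h0 : F (X.pos n) (X.cnt (X.pos n)) = 0)
    (k : Fin m) : (arwStep F n X).typ k =
      if k = n then decide (1 < X.toConfig.total (X.pos n)) else X.typ k := by
  simp only [one_lt_total_iff]
  simp [arwStep, h, h0]

theorem arwStep_pos_of_ne_zero (h : X.typ n = true) (h0 : F (X.pos n) (X.cnt (X.pos n)) ≠ 0)
    (k : Fin m) : (arwStep F n X).pos k =
      if k = n then X.pos n + F (X.pos n) (X.cnt (X.pos n)) else X.pos k := by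
  simp [arwStep, h, h0]

theorem arwStep_typ_of_ne_zero (h : X.typ n = true) (h0 : F (X.pos n) (X.cnt (X.pos n)) ≠ 0)
    (k : Fin m) : (arwStep F n X).typ k =
      if (arwStep F n X).pos k = X.pos n + F (X.pos n) (X.cnt (X.pos n)) then true
      else X.typ k := by
  simp [arwStep, h, h0]

theorem toConfig_arwStep_of_eq_zero (h : X.typ n = true)
    (h0 : F (X.pos n) (X.cnt (X.pos n)) = 0) :
    (arwStep F n X).toConfig = X.toConfig.topple F (X.pos n) := by
  have ha := toConfig_active_ne_zero h
  have hpos := arwStep_pos_of_eq_zero h h0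
  ext w
  · have key := active_add_ite_eq (X := X) (X' := arwStep F n X) (w := w) fun k hk => by
      rw [hpos, arwStep_typ_of_eq_zero h h0, if_neg hk]
    rw [hpos, arwStep_typ_of_eq_zero h h0, if_pos rfl, h] at key
    rw [ARWConfig.topple_active ha, toConfig_cnt, if_pos h0]
    rcases eq_or_ne (X.pos n) w with rfl | hw
    · have := X.toConfig_valid (X.pos n)
      simp only [true_and, if_true, decide_eq_true_iff] at key
      split_ifs at key ⊢ <;> omega
    · simp only [hw, false_and, if_false, add_zero] at key
      rw [if_neg (by rintro ⟨rfl, -⟩; exact hw rfl), key]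
  · simp [ARWConfig.topple_total ha, h0, hpos]
  · simp [ARWConfig.topple_cnt ha, arwStep_cnt h]

theorem toConfig_arwStep_of_ne_zero (h : X.typ n = true)
    (h0 : F (X.pos n) (X.cnt (X.pos n)) ≠ 0) :
    (arwStep F n X).toConfig = X.toConfig.topple F (X.pos n) := by
  have ha := toConfig_active_ne_zero h
  have hvalid := X.toConfig_valid (X.pos n)
  have hpos := arwStep_pos_of_ne_zero h h0
  have htyp := arwStep_typ_of_ne_zero h h0
  set t := X.pos n + F (X.pos n) (X.cnt (X.pos n)) with ht
  have htn : X.pos n ≠ t := by omega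
  have htotal (w : ℤ) := total_add_ite_eq (X := X) (X' := arwStep F n X)
    (fun k hk => by rw [hpos, if_neg hk]) w
  simp only [hpos, if_true] at htotal
  have htotal_t := htotal t
  simp only [htn, if_true, if_false, add_zero] at htotal_t
  ext w
  · rw [ARWConfig.topple_active ha, toConfig_cnt, if_neg h0, ← ht]
    rcases eq_or_ne w t with rfl | hwt
    · rw [if_pos rfl, ← htotal_t]
      simp only [toConfig_active, toConfig_total]
      exact congrArg card (filter_congr fun k _ => by simp +contextual [htyp])
    · have key := active_add_ite_eq (X := X) (X' := arwStep F n X) (w := w) fun k hk => by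
        rw [htyp, hpos, if_neg hk]
        by_cases hkw : X.pos k = w
        · rw [if_neg (hkw ▸ hwt)]
        · simp [hkw]
      simp only [hpos, if_true, h, and_true, Ne.symm hwt, false_and, if_false, add_zero] at key
      rw [if_neg hwt]
      rcases eq_or_ne w (X.pos n) with rfl | hwz
      · simp only [if_true] at key ⊢; omega
      · simp only [Ne.symm hwz, if_false, add_zero] at key
        rw [if_neg hwz, key]
  · rw [ARWConfig.topple_total ha, toConfig_cnt, if_neg h0, ← ht]
    have key := htotal w
    rcases eq_or_ne w t with rfl | hwt
    · rw [if_pos rfl, htotal_t]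
    · rcases eq_or_ne w (X.pos n) with rfl | hwz
      · simp only [hwt, Ne.symm htn, if_true, if_false] at key ⊢; omega
      · simp only [Ne.symm hwz, Ne.symm hwt, hwt, hwz, if_false, add_zero] at key ⊢
        exact key
  · simp [ARWConfig.topple_cnt ha, arwStep_cnt h]

theorem toConfig_arwStep (h : X.typ n = true) :
    (arwStep F n X).toConfig = X.toConfig.topple F (X.pos n) := by
  by_cases h0 : F (X.pos n) (X.cnt (X.pos n)) = 0
  · exact toConfig_arwStep_of_eq_zero h h0
  · exact toConfig_arwStep_of_ne_zero h h0

theorem exists_isLegal_toppleList_eq_toConfig_arwEvolve (F : ℤ → ℕ → ℤ)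
    (N : ℕ → Fin m) (X : ARWState m) (k : ℕ) :
    ∃ w, ARWConfig.IsLegal F w X.toConfig ∧
      X.toConfig.toppleList F w = (arwEvolve F N X k).toConfig := by
  induction k with
  | zero => exact ⟨[], trivial, rfl⟩
  | succ k ih =>
    obtain ⟨w, hw, hwk⟩ := ih
    cases h : (arwEvolve F N X k).typ (N k)
    · exact ⟨w, hw, by rw [hwk, arwEvolve, arwStep_of_typ_false h]⟩
    · refine ⟨w ++ [(arwEvolve F N X k).pos (N k)], ?_, ?_⟩
      · rw [ARWConfig.isLegal_append, hwk]
        exact ⟨hw, toConfig_active_ne_zero h, trivial⟩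
      · rw [ARWConfig.toppleList_append, hwk, arwEvolve, toConfig_arwStep h]
        rfl

theorem stabilizesAt_of_forall_typ_false {N : ℕ → Fin m} (hN : FairSeq N) {K : ℕ}
    (hK : ∀ k ≥ K, (arwEvolve F N X k).typ (N k) = false) :
    StabilizesAt F N X (arwEvolve F N X K) := by
  have hconst : ∀ k ≥ K, arwEvolve F N X k = arwEvolve F N X K := by
    intro k hk
    induction k, hk using Nat.le_induction with
    | base => rfl
    | succ k hk ih => rw [arwEvolve, arwStep_of_typ_false (hK k hk), ih]
  refine ⟨⟨K, hconst⟩, fun n => ?_⟩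
  obtain ⟨k, hk, rfl⟩ := hN n K
  rw [← hconst k hk]
  exact hK k hk

theorem exists_forall_typ_false_of_cnt_le {N : ℕ → Fin m} (S : Finset ℤ) (b : ℤ → ℕ)
    (hS : ∀ k, (arwEvolve F N X k).typ (N k) = true → (arwEvolve F N X k).pos (N k) ∈ S)
    (hb : ∀ k, ∀ z ∈ S, (arwEvolve F N X k).cnt z ≤ b z) :
    ∃ K, ∀ k ≥ K, (arwEvolve F N X k).typ (N k) = false := by
  set Φ : ℕ → ℕ := fun k => ∑ z ∈ S, (arwEvolve F N X k).cnt z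
  have hΦ k : Φ (k + 1) = Φ k + if (arwEvolve F N X k).typ (N k) = true then 1 else 0 := by
    cases h : (arwEvolve F N X k).typ (N k)
    · simp [Φ, arwEvolve, arwStep_of_typ_false h]
    · simp only [Φ, arwEvolve, arwStep_cnt h, if_true]
      rw [← add_sum_erase _ _ (hS k h), ← add_sum_erase _ _ (hS k h), if_pos rfl,
        sum_congr rfl fun z hz => if_neg (ne_of_mem_erase hz)]
      ring
  have hmono : Monotone Φ := monotone_nat_of_le_succ fun k => by rw [hΦ k]; omega
  by_contra! hinf
  have hunbdd : ∀ B, ∃ k, B ≤ Φ k := by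
    intro B
    induction B with
    | zero => exact ⟨0, Nat.zero_le _⟩
    | succ B ih =>
      obtain ⟨k, hk⟩ := ih
      obtain ⟨k', hkk', hk'⟩ := hinf k
      refine ⟨k' + 1, ?_⟩
      rw [hΦ, if_pos (Bool.not_eq_false _ ▸ hk')]
      have := hmono hkk'; omega
  obtain ⟨k, hk⟩ := hunbdd (∑ z ∈ S, b z + 1)
  have : Φ k ≤ ∑ z ∈ S, b z := sum_le_sum (hb k)
  omega

end ARWState

/-- `F'` arises from `F` by inserting sleep instructions: the `j`-th envelope of `F` at `z`
becomes the `φ z j`-th envelope of `F'`. -/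
structure SleepInsertion (φ : ℤ → ℕ → ℕ) (F F' : ℤ → ℕ → ℤ) : Prop where
  strictMono : ∀ z, StrictMono (φ z)
  apply_eq : ∀ z j, F' z (φ z j) = F z j
  eq_zero_of_forall_ne : ∀ z i, (∀ j, φ z j ≠ i) → F' z i = 0

theorem jumpCount_mono (F : ℤ → ℕ → ℤ) (z : ℤ) {c c' : ℕ} (h : c ≤ c') :
    jumpCount F z c ≤ jumpCount F z c' :=
  card_le_card (filter_subset_filter _ (range_subset_range.2 h))

theorem SleepInsertion.jumpCount_eq {φ : ℤ → ℕ → ℕ} {F F' : ℤ → ℕ → ℤ}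
    (hφ : SleepInsertion φ F F') {z : ℤ} {c c' : ℕ} (h : ∀ j, j < c ↔ φ z j < c') :
    jumpCount F' z c' = jumpCount F z c := by
  have himage : {i ∈ range c' | F' z i ≠ 0} = {j ∈ range c | F z j ≠ 0}.map
      ⟨φ z, (hφ.strictMono z).injective⟩ := by
    ext i
    simp only [mem_filter, mem_range, mem_map, Function.Embedding.coeFn_mk]
    constructor
    · rintro ⟨hi, hFi⟩
      obtain ⟨j, rfl⟩ : ∃ j, φ z j = i := by
        by_contra! hne
        exact hFi (hφ.eq_zero_of_forall_ne z i hne)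
      exact ⟨j, ⟨(h j).2 hi, hφ.apply_eq z j ▸ hFi⟩, rfl⟩
    · rintro ⟨j, ⟨hj, hFj⟩, rfl⟩
      exact ⟨(h j).1 hj, (hφ.apply_eq z j).symm ▸ hFj⟩
  rw [jumpCount, himage, card_map, jumpCount]

namespace ARWConfig

variable {φ : ℤ → ℕ → ℕ} {F F' : ℤ → ℕ → ℤ} {Y Q : ARWConfig} {z : ℤ}

/-- The `j`-th envelope opened by `Y` at `z` corresponds to the `φ z j`-th one opened by `Q`. -/
structure Dominates (φ : ℤ → ℕ → ℕ) (Y Q : ARWConfig) : Prop where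
  total_le : ∀ z, Q.total z ≤ Y.total z
  active_le : ∀ z, Q.active z ≤ Y.active z
  lt_cnt_iff : ∀ z j, j < Y.cnt z ↔ φ z j < Q.cnt z

theorem Dominates.cnt_le (hD : Dominates φ Y Q) (z : ℤ) : Q.cnt z ≤ φ z (Y.cnt z) :=
  not_lt.1 fun h => lt_irrefl _ ((hD.lt_cnt_iff z _).2 h)

theorem Dominates.active_ne_zero (hD : Dominates φ Y Q) (hz : Q.active z ≠ 0) :
    Y.active z ≠ 0 := by
  have := hD.active_le z; omega

theorem Dominates.topple_of_eq (hφ : SleepInsertion φ F F') (hD : Dominates φ Y Q)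
    (hQ : Q.Valid) (hz : Q.active z ≠ 0) {i : ℕ} (hi : φ z i = Q.cnt z) :
    Y.active z ≠ 0 ∧ Dominates φ (Y.topple F z) (Q.topple F' z) := by
  have hY := hD.active_ne_zero hz
  -- `Q` has opened `φ z j` exactly for `j < Y.cnt z`, and `φ z i` is the next one
  have hiY : Y.cnt z = i := by
    have h₁ := hD.lt_cnt_iff z i
    have h₂ := hD.lt_cnt_iff z (Y.cnt z)
    have := (hφ.strictMono z).lt_iff_lt (a := Y.cnt z) (b := i)
    omega
  have hF : F' z (Q.cnt z) = F z (Y.cnt z) := by rw [← hi, hφ.apply_eq, hiY]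
  refine ⟨hY, ⟨fun w => ?_, fun w => ?_, fun w j => ?_⟩⟩
  · rw [topple_total hz, topple_total hY, hF]
    have := hD.total_le w; have := hD.total_le z
    split_ifs <;> omega
  · rw [topple_active hz, topple_active hY, hF]
    have := hD.active_le w; have := hD.active_le z; have := hD.total_le w; have := hD.total_le z
    have := hQ z
    split_ifs <;> omega
  · rw [topple_cnt hz, topple_cnt hY]
    split_ifs with hw
    · rw [hw, ← hi, hiY, Nat.lt_succ_iff, Nat.lt_succ_iff, (hφ.strictMono z).le_iff_le]
    · exact hD.lt_cnt_iff w j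

theorem Dominates.topple_of_forall_ne (hφ : SleepInsertion φ F F') (hD : Dominates φ Y Q)
    (hz : Q.active z ≠ 0) (hi : ∀ j, φ z j ≠ Q.cnt z) : Dominates φ Y (Q.topple F' z) := by
  have hF := hφ.eq_zero_of_forall_ne z _ hi
  refine ⟨fun w => ?_, fun w => ?_, fun w j => ?_⟩
  · rw [topple_total hz, if_pos hF]; exact hD.total_le w
  · rw [topple_active hz, if_pos hF]
    have := hD.active_le w
    split_ifs <;> omega
  · rw [topple_cnt hz, hD.lt_cnt_iff]
    split_ifs with hw
    · subst hw; have := hi j; omega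
    · rfl

theorem Dominates.exists_isLegal_topple (hφ : SleepInsertion φ F F') (hD : Dominates φ Y Q)
    (hQ : Q.Valid) (hz : Q.active z ≠ 0) :
    ∃ v, IsLegal F v Y ∧ Dominates φ (Y.toppleList F v) (Q.topple F' z) := by
  by_cases hi : ∃ i, φ z i = Q.cnt z
  · obtain ⟨i, hi⟩ := hi
    obtain ⟨hY, hD'⟩ := hD.topple_of_eq hφ hQ hz hi
    exact ⟨[z], ⟨hY, trivial⟩, hD'⟩
  · exact ⟨[], trivial, hD.topple_of_forall_ne hφ hz fun j h => hi ⟨j, h⟩⟩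

end ARWConfig

namespace ARWState

variable {m m' : ℕ}

theorem dominates_toConfig {φ : ℤ → ℕ → ℕ} {X : ARWState m} {X' : ARWState m'}
    (hcnt : ∀ z, X.cnt z = 0) (hcnt' : ∀ z, X'.cnt z = 0) {ι : Fin m' → Fin m}
    (hι : Function.Injective ι) (hpos : ∀ n, X'.pos n = X.pos (ι n))
    (htyp : ∀ n, X'.typ n = true → X.typ (ι n) = true) :
    ARWConfig.Dominates φ X.toConfig X'.toConfig where
  total_le z := by
    simp only [toConfig_total]
    exact card_le_card_of_injOn ι (fun n hn => by simp_all) hι.injOn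
  active_le z := by
    simp only [toConfig_active]
    exact card_le_card_of_injOn ι (fun n hn => by simp_all) hι.injOn
  lt_cnt_iff z j := by simp [hcnt, hcnt']

theorem exists_dominates_toConfig_arwEvolve {φ : ℤ → ℕ → ℕ} {F F' : ℤ → ℕ → ℤ}
    (hφ : SleepInsertion φ F F') {Y : ARWConfig} {X' : ARWState m'} (N' : ℕ → Fin m')
    (hD : ARWConfig.Dominates φ Y X'.toConfig) (k : ℕ) :
    ∃ v, ARWConfig.IsLegal F v Y ∧
      ARWConfig.Dominates φ (Y.toppleList F v) (arwEvolve F' N' X' k).toConfig := by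
  induction k with
  | zero => exact ⟨[], trivial, hD⟩
  | succ k ih =>
    obtain ⟨v, hv, hDk⟩ := ih
    cases h : (arwEvolve F' N' X' k).typ (N' k)
    · exact ⟨v, hv, by rwa [arwEvolve, arwStep_of_typ_false h]⟩
    · obtain ⟨v', hv', hD'⟩ := hDk.exists_isLegal_topple hφ (toConfig_valid _)
        (toConfig_active_ne_zero h)
      refine ⟨v ++ v', ARWConfig.isLegal_append.2 ⟨hv, hv'⟩, ?_⟩
      rwa [arwEvolve, toConfig_arwStep h, ARWConfig.toppleList_append]

end ARWState

open ARWState ARWConfig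

theorem arw_monotonicity_general {m m' : ℕ} (F F' : ℤ → ℕ → ℤ)
    (X : ARWState m) (X' : ARWState m')
    (hcnt : ∀ z, X.cnt z = 0) (hcnt' : ∀ z, X'.cnt z = 0)
    (ι : Fin m' → Fin m) (hι : Function.Injective ι)
    (hpos : ∀ n, X'.pos n = X.pos (ι n))
    (htyp : ∀ n, X'.typ n = true → X.typ (ι n) = true)
    (φ : ℤ → ℕ → ℕ) (hφmono : ∀ z, StrictMono (φ z))
    (hφval : ∀ z j, F' z (φ z j) = F z j)
    (hφsleep : ∀ z i, (∀ j, φ z j ≠ i) → F' z i = 0)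
    (N : ℕ → Fin m)
    (Xf : ARWState m) (hstab : StabilizesAt F N X Xf)
    (N' : ℕ → Fin m') (hN' : FairSeq N') :
    ∃ Xf' : ARWState m', StabilizesAt F' N' X' Xf' ∧
      ∀ z, jumpCount F' z (Xf'.cnt z) ≤ jumpCount F z (Xf.cnt z) := by
  have hφ : SleepInsertion φ F F' := ⟨hφmono, hφval, hφsleep⟩
  obtain ⟨⟨k₀, hk₀⟩, hXf⟩ := hstab
  obtain ⟨w, hw, hwXf⟩ := exists_isLegal_toppleList_eq_toConfig_arwEvolve F N X k₀
  rw [hk₀ k₀ le_rfl] at hwXf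
  have hstable : ∀ s, (X.toConfig.toppleList F w).active s = 0 := by simp [hwXf, hXf]
  choose v hv hD using exists_dominates_toConfig_arwEvolve hφ N'
    (dominates_toConfig (φ := φ) hcnt hcnt' hι hpos htyp)
  have hcnt_le k z : (X.toConfig.toppleList F (v k)).cnt z ≤ Xf.cnt z := by
    simpa [hwXf] using cnt_toppleList_le_of_isLegal (toConfig_valid X) hw hstable (hv k) z
  obtain ⟨K, hK⟩ := exists_forall_typ_false_of_cnt_le (F := F') (N := N') (X := X') w.toFinset
    (fun z => φ z (Xf.cnt z))
    (fun k h => List.mem_toFinset.2 <| mem_of_isLegal_of_active_ne_zero (toConfig_valid X) hw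
      hstable (hv k) ((hD k).active_ne_zero (toConfig_active_ne_zero h)))
    (fun k z _ => ((hD k).cnt_le z).trans ((hφmono z).monotone (hcnt_le k z)))
  refine ⟨_, stabilizesAt_of_forall_typ_false hN' hK, fun z => ?_⟩
  rw [← toConfig_cnt, hφ.jumpCount_eq ((hD K).lt_cnt_iff z)]
  exact jumpCount_mono F z (hcnt_le K z)

/-- **Monotonicity.** Suppose `(X', F') ⪯ (X, F)`: both initial states have all counters
zero; `X'` is obtained from `X` by deleting some particles (via an injection `ι` of the
remaining labels) and changing the types of some remaining particles from B (active) to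
A (passive), keeping their positions; and at every site `z`, `F'_{z,·}` is obtained from
`F_{z,·}` by inserting sleep instructions (via strictly increasing maps `φ z`). If for
some label sequence `N ∈ 𝒩_m` the evolution of `X` under `F` stabilizes, then for every
label sequence `N' ∈ 𝒩_{m'}` the evolution of `X'` under `F'` also stabilizes, and at
every site the number of jump instructions opened in the primed evolution is at most the
number of jump instructions opened in the unprimed evolution: `R'_z ≤ R_z`. -/
theorem arw_monotonicity {m m' : ℕ} (F F' : ℤ → ℕ → ℤ)
    (hF : ValidEnvelopes F) (hF' : ValidEnvelopes F')
    (X : ARWState m) (X' : ARWState m')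
    (hcnt : ∀ z, X.cnt z = 0) (hcnt' : ∀ z, X'.cnt z = 0)
    (ι : Fin m' → Fin m) (hι : Function.Injective ι)
    (hpos : ∀ n, X'.pos n = X.pos (ι n))
    (htyp : ∀ n, X'.typ n = true → X.typ (ι n) = true)
    (φ : ℤ → ℕ → ℕ) (hφmono : ∀ z, StrictMono (φ z))
    (hφval : ∀ z j, F' z (φ z j) = F z j)
    (hφsleep : ∀ z i, (∀ j, φ z j ≠ i) → F' z i = 0)
    (N : ℕ → Fin m) (hN : FairSeq N)
    (Xf : ARWState m) (hstab : StabilizesAt F N X Xf)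
    (N' : ℕ → Fin m') (hN' : FairSeq N') :
    ∃ Xf' : ARWState m', StabilizesAt F' N' X' Xf' ∧
      ∀ z, jumpCount F' z (Xf'.cnt z) ≤ jumpCount F z (Xf.cnt z) :=
  arw_monotonicity_general F F' X X' hcnt hcnt' ι hι hpos htyp φ hφmono hφval hφsleep N Xf hstab N'
    hN'
end

section
/- Time-reflection symmetry of the total broken-line weight: let S be a rectangular domain and ξ : S → [0,∞) a birth field. Let M : (t,x) ↦ (−t,x), S' = M(S), and ξ'(t,x) = ξ(−t,x). Then H_S(ξ) = H_{S'}(ξ'). -/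
/-! Common definitions for the broken line process on the even sublattice
`Z̃² = {(t,x) ∈ ℤ² : t + x even}`. A point is a pair `(t, x)`. -/

/-- A point `(t, x)` of `ℤ²`. -/
abbrev BLPt := ℤ × ℤ

/-- An edge between diagonal nearest neighbors, encoded by its endpoint of smaller
`x`-coordinate together with a direction: `(y, true)` is the edge from `y = (t,x)` to
`(t+1, x+1)`, and `(y, false)` is the edge from `y` to `(t−1, x+1)`. -/
abbrev BLEdge := BLPt × Bool

namespace BL

/-- The endpoint of an edge with smaller `x`-coordinate. -/
def fstPt (e : BLEdge) : BLPt := e.1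

/-- The endpoint of an edge with larger `x`-coordinate. -/
def sndPt (e : BLEdge) : BLPt := (e.1.1 + (if e.2 then 1 else -1), e.1.2 + 1)

/-- The edge `e_y^NE` from `y = (t,x)` to `(t+1, x+1)`. -/
def eNE (y : BLPt) : BLEdge := (y, true)

/-- The edge `e_y^NW` from `y = (t,x)` to `(t−1, x+1)`. -/
def eNW (y : BLPt) : BLEdge := (y, false)

/-- The edge `e_y^SE` from `y = (t,x)` to `(t+1, x−1)`. -/
def eSE (y : BLPt) : BLEdge := ((y.1 + 1, y.2 - 1), false)

/-- The edge `e_y^SW` from `y = (t,x)` to `(t−1, x−1)`. -/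
def eSW (y : BLPt) : BLEdge := ((y.1 - 1, y.2 - 1), true)

/-- A rectangular domain: a nonempty set of the form
`{(t,x) ∈ Z̃² : a ≤ x + t ≤ b, c ≤ x − t ≤ d}`. -/
def IsRectDomain (S : Set BLPt) : Prop :=
  S.Nonempty ∧ ∃ a b c d : ℤ,
    S = {y | (y.1 + y.2) % 2 = 0 ∧
      a ≤ y.2 + y.1 ∧ y.2 + y.1 ≤ b ∧ c ≤ y.2 - y.1 ∧ y.2 - y.1 ≤ d}

/-- `S̄`: the union of `S` with all points at Euclidean distance `√2` from a point
of `S` (i.e. diagonal nearest neighbors of points of `S`). -/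
def bar (S : Set BLPt) : Set BLPt :=
  S ∪ {y | ∃ y' ∈ S, (y.1 - y'.1) ^ 2 = 1 ∧ (y.2 - y'.2) ^ 2 = 1}

/-- `∂S̄ = S̄ \ S`. -/
def bdry (S : Set BLPt) : Set BLPt := bar S \ S

/-- `ℰ(S̄)`: the edges with at least one endpoint in `S`. -/
def edgeSet (S : Set BLPt) : Set BLEdge := {e | fstPt e ∈ S ∨ sndPt e ∈ S}

/-- A flow field on `ℰ(S̄)`: nonnegative on `ℰ(S̄)` and conservative at every `y ∈ S`:
`η(e_y^SW) + η(e_y^SE) = η(e_y^NW) + η(e_y^NE)`. -/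
def IsFlowField (S : Set BLPt) (η : BLEdge → ℝ) : Prop :=
  (∀ e ∈ edgeSet S, 0 ≤ η e) ∧
  ∀ y ∈ S, η (eSW y) + η (eSE y) = η (eNW y) + η (eNE y)

/-- A broken trace `(y₀, e₁, y₁, …, e_n, y_n)`, `n ≥ 1`, encoded by its list of points:
all points lie in `Z̃²`, and consecutive points satisfy `x_{i} = x_{i−1} + 1`,
`t_i = t_{i−1} ± 1` (the edges are then determined). -/
def IsBrokenTrace (l : List BLPt) : Prop :=
  2 ≤ l.length ∧ (∀ y ∈ l, (y.1 + y.2) % 2 = 0) ∧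
  ∀ i : ℕ, ∀ h : i + 1 < l.length,
    (l[i + 1]'h).2 = (l[i]'(Nat.lt_of_succ_lt h)).2 + 1 ∧
    ((l[i + 1]'h).1 = (l[i]'(Nat.lt_of_succ_lt h)).1 + 1 ∨
      (l[i + 1]'h).1 = (l[i]'(Nat.lt_of_succ_lt h)).1 - 1)

/-- The list of edges `e₁, …, e_n` of a broken trace. -/
def traceEdges (l : List BLPt) : List BLEdge :=
  List.zipWith (fun y y' => ((y, y'.1 == y.1 + 1) : BLEdge)) l l.tail

/-- `ℓ ⊆ S̄`: a broken trace all of whose edges lie in `ℰ(S̄)`. -/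
def InBar (S : Set BLPt) (l : List BLPt) : Prop :=
  IsBrokenTrace l ∧ ∀ e ∈ traceEdges l, e ∈ edgeSet S

/-- `ℓ` crosses `S`: `ℓ ⊆ S̄` and its two extremal points lie in `∂S̄`.
`C(S)` is the set of broken traces crossing `S`. -/
def Crosses (S : Set BLPt) (l : List BLPt) : Prop :=
  InBar S l ∧ (∃ y ∈ bdry S, l.head? = some y) ∧ (∃ y ∈ bdry S, l.getLast? = some y)

/-- `ℓ ⪰ ℓ'` (`ℓ` is to the right of `ℓ'`): `t(x) ≥ t'(x)` for every
`x ∈ D(ℓ) ∩ D(ℓ')`, and `t(x) ≥ t'(x')` for some `x ∈ D(ℓ)`, `x' ∈ D(ℓ')`. -/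
def RightOf (l l' : List BLPt) : Prop :=
  (∀ y ∈ l, ∀ y' ∈ l', y.2 = y'.2 → y'.1 ≤ y.1) ∧
  ∃ y ∈ l, ∃ y' ∈ l', y'.1 ≤ y.1

/-- The birth `ξ_y = min(η(e_y^NE), η(e_y^SE))` of a flow field at `y`. -/
noncomputable def xi (η : BLEdge → ℝ) (y : BLPt) : ℝ := min (η (eNE y)) (η (eSE y))

/-- Association of atoms `(e₁,p₁) ∼ (e₂,p₂)` at a vertex `y ∈ S` (Cases 1–4). -/
def Assoc (S : Set BLPt) (η : BLEdge → ℝ) (e₁ : BLEdge) (p₁ : ℝ) (e₂ : BLEdge) (p₂ : ℝ) :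
    Prop :=
  ∃ y ∈ S,
    (e₁ = eSW y ∧ e₂ = eNW y ∧ 0 < p₁ ∧ p₁ ≤ min (η e₁) (η e₂) ∧ p₂ = p₁) ∨
    (e₁ = eSE y ∧ e₂ = eNW y ∧ η (eSW y) < p₂ ∧ p₂ ≤ η e₂ ∧ p₁ = p₂ - η (eSW y)) ∨
    (e₁ = eSW y ∧ e₂ = eNE y ∧ η (eNW y) < p₁ ∧ p₁ ≤ η e₁ ∧ p₂ = p₁ - η (eNW y)) ∨
    (e₁ = eSE y ∧ e₂ = eNE y ∧ η e₁ - xi η y < p₁ ∧ p₁ ≤ η e₁ ∧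
      η e₂ - xi η y < p₂ ∧ p₂ ≤ η e₂ ∧ η e₁ - p₁ = η e₂ - p₂)

/-- A chain of associated atoms along a list of edges: `ps i` is an atom of the `i`-th
edge and consecutive atoms are associated. -/
def IsChain (S : Set BLPt) (η : BLEdge → ℝ) (es : List BLEdge) (ps : ℕ → ℝ) : Prop :=
  (∀ i : ℕ, ∀ h : i < es.length, 0 < ps i ∧ ps i ≤ η (es[i]'h)) ∧
  ∀ i : ℕ, ∀ h : i + 1 < es.length,
    Assoc S η (es[i]'(Nat.lt_of_succ_lt h)) (ps i) (es[i + 1]'h) (ps (i + 1))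

/-- The set of atoms of the `i`-th edge of `ℓ` that participate in some chain of
associated atoms along `ℓ`. -/
def chainPosSet (S : Set BLPt) (η : BLEdge → ℝ) (l : List BLPt) (i : ℕ) : Set ℝ :=
  {p | ∃ ps : ℕ → ℝ, IsChain S η (traceEdges l) ps ∧ ps i = p}

/-- The weight `w_η(ℓ)` of a broken trace: the common length of the maximal intervals
of atoms participating in chains along `ℓ` (and `0` if there is no such chain). -/
noncomputable def weight (S : Set BLPt) (η : BLEdge → ℝ) (l : List BLPt) : ℝ := by
  classical
  exact if (chainPosSet S η l 0).Nonempty then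
      sSup (chainPosSet S η l 0) - sInf (chainPosSet S η l 0)
    else 0

end BL

namespace BL

/-- An edge of `ℰ(S̄)` joining `y ∈ S` to `y' ∈ ∂S̄` with `t_{y'} = t_y − 1`
(a left-boundary edge, carrying the incoming boundary data `ζ°`). -/
def IsLeftBdryEdge (S : Set BLPt) (e : BLEdge) : Prop :=
  (fstPt e ∈ S ∧ sndPt e ∉ S ∧ (sndPt e).1 < (fstPt e).1) ∨
  (sndPt e ∈ S ∧ fstPt e ∉ S ∧ (fstPt e).1 < (sndPt e).1)

/-- Zero boundary conditions: `η` vanishes on all left-boundary edges. -/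
def ZeroLeftBoundary (S : Set BLPt) (η : BLEdge → ℝ) : Prop :=
  ∀ e : BLEdge, IsLeftBdryEdge S e → η e = 0

/-- The recursion defining the flow field `η(ζ°, ξ)` from the birth field `ξ`:
at every `y ∈ S`, `η(e_y^NE) = ξ_y + (η(e_y^SW) − η(e_y^NW))⁺` and
`η(e_y^SE) = ξ_y + (η(e_y^NW) − η(e_y^SW))⁺`. -/
def BirthRecursion (S : Set BLPt) (η : BLEdge → ℝ) (ξ : BLPt → ℝ) : Prop :=
  ∀ y ∈ S, η (eNE y) = ξ y + max (η (eSW y) - η (eNW y)) 0 ∧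
    η (eSE y) = ξ y + max (η (eNW y) - η (eSW y)) 0

/-- A directed path `π ∈ Π_S`: it stays in `S`, starts at the unique leftmost point
`∂₀S` (minimal `t`), ends at the unique rightmost point `∂₁S` (maximal `t`), and
satisfies `t_{i+1} = t_i + 1`, `x_{i+1} = x_i ± 1`. -/
def IsLppPath (S : Set BLPt) (p : List BLPt) : Prop :=
  p ≠ [] ∧ (∀ y ∈ p, y ∈ S) ∧
  (∀ y, p.head? = some y → ∀ y' ∈ S, y.1 ≤ y'.1) ∧
  (∀ y, p.getLast? = some y → ∀ y' ∈ S, y'.1 ≤ y.1) ∧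
  ∀ i : ℕ, ∀ h : i + 1 < p.length,
    (p[i + 1]'h).1 = (p[i]'(Nat.lt_of_succ_lt h)).1 + 1 ∧
    ((p[i + 1]'h).2 = (p[i]'(Nat.lt_of_succ_lt h)).2 + 1 ∨
      (p[i + 1]'h).2 = (p[i]'(Nat.lt_of_succ_lt h)).2 - 1)

/-- The last passage percolation value `G_S(ξ) = max_{π ∈ Π_S} Σ_{y ∈ π} ξ_y`. -/
noncomputable def lppValue (S : Set BLPt) (ξ : BLPt → ℝ) : ℝ :=
  sSup {v : ℝ | ∃ p : List BLPt, IsLppPath S p ∧ (p.map ξ).sum = v}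

end BL


/-! In light-cone coordinates `p = (x + t) / 2`, `q = (x - t) / 2` a rectangular domain is a
product of integer intervals `[A, B] × [C, D]`, and with zero left boundary data the recursion for
`η` says that `η(e^NE)` and `η(e^SE)` at `(p, q)` are the increments of the last passage value
`G(p, q)` from the leftmost corner `(A, D)` to `(p, q)`. The edges entering `S` from below that
carry flow are the `e^SE` edges of the side `q = C`, so `H_S(ξ)` telescopes to the last passage
value `G_S(ξ)` of the whole rectangle. The reflection `(t, x) ↦ (-t, x)` exchanges `p` and `q`,
and the last passage value is invariant under transposing the weights because reversing a path
exchanges its two corners. -/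

namespace BL

/-- The maximal `w`-weight of a path from `(A, D)` to `(B, C)` with steps `(1, 0)` and `(0, -1)`,
and `0` if the rectangle `[A, B] × [C, D]` is empty. -/
def lastPassage {α : Type*} [AddCommMonoid α] [LinearOrder α] (w : ℤ → ℤ → α) (A B C D : ℤ) :
    α :=
  if A ≤ B ∧ C ≤ D then
    w B C + max (lastPassage w A (B - 1) C D) (lastPassage w A B (C + 1) D)
  else 0
termination_by (B - A + (D - C) + 2).toNat

section lastPassage

variable {α : Type*} [AddCommMonoid α] [LinearOrder α] {w : ℤ → ℤ → α}

theorem lastPassage_of_le {A B C D : ℤ} (hAB : A ≤ B) (hCD : C ≤ D) :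
    lastPassage w A B C D =
      w B C + max (lastPassage w A (B - 1) C D) (lastPassage w A B (C + 1) D) := by
  rw [lastPassage, if_pos ⟨hAB, hCD⟩]

theorem lastPassage_of_not_le {A B C D : ℤ} (h : ¬(A ≤ B ∧ C ≤ D)) :
    lastPassage w A B C D = 0 := by
  rw [lastPassage, if_neg h]

theorem lastPassage_nonneg [IsOrderedAddMonoid α] (hw : ∀ p q, 0 ≤ w p q) (A B C D : ℤ) :
    0 ≤ lastPassage w A B C D := by
  by_cases h : A ≤ B ∧ C ≤ D
  · rw [lastPassage_of_le h.1 h.2]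
    exact add_nonneg (hw B C) ((lastPassage_nonneg hw A (B - 1) C D).trans (le_max_left _ _))
  · rw [lastPassage_of_not_le h]
termination_by (B - A + (D - C) + 2).toNat

theorem lastPassage_of_le_rev [IsOrderedAddMonoid α] (hw : ∀ p q, 0 ≤ w p q) {A B C D : ℤ}
    (hAB : A ≤ B) (hCD : C ≤ D) :
    lastPassage w A B C D =
      w A D + max (lastPassage w (A + 1) B C D) (lastPassage w A B C (D - 1)) := by
  have h0 := lastPassage_nonneg hw
  rw [lastPassage_of_le hAB hCD]
  rcases hAB.eq_or_lt with rfl | hAB <;> rcases hCD.eq_or_lt with rfl | hCD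
  · simp (disch := omega) only [lastPassage_of_not_le]
  · rw [lastPassage_of_le_rev hw le_rfl (by omega : C + 1 ≤ D),
      lastPassage_of_le le_rfl (by omega : C ≤ D - 1)]
    simp (disch := omega) only [lastPassage_of_not_le]
    have := h0 A A (C + 1) (D - 1)
    rw [max_eq_right this, max_eq_right (add_nonneg (hw A D) this),
      max_eq_right (add_nonneg (hw A C) this)]
    exact add_left_comm _ _ _
  · rw [lastPassage_of_le_rev hw (by omega : A ≤ B - 1) le_rfl,
      lastPassage_of_le (by omega : A + 1 ≤ B) le_rfl]
    simp (disch := omega) only [lastPassage_of_not_le]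
    have := h0 (A + 1) (B - 1) C C
    rw [max_eq_left this, max_eq_left (add_nonneg (hw A C) this),
      max_eq_left (add_nonneg (hw B C) this)]
    exact add_left_comm _ _ _
  · rw [lastPassage_of_le_rev hw (by omega : A ≤ B - 1) hCD.le,
      lastPassage_of_le_rev hw hAB.le (by omega : C + 1 ≤ D),
      lastPassage_of_le hAB hCD.le, lastPassage_of_le hAB.le (by omega : C ≤ D - 1),
      max_add_add_left, max_add_add_left, max_max_max_comm]
    exact add_left_comm _ _ _
termination_by (B - A + (D - C) + 2).toNat

theorem lastPassage_swap [IsOrderedAddMonoid α] (hw : ∀ p q, 0 ≤ w p q) (A B C D : ℤ) :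
    lastPassage w A B C D = lastPassage (Function.swap w) C D A B := by
  by_cases h : A ≤ B ∧ C ≤ D
  · rw [lastPassage_of_le h.2 h.1, lastPassage_of_le_rev hw h.1 h.2,
      lastPassage_swap hw A B C (D - 1), lastPassage_swap hw (A + 1) B C D, max_comm]
  · rw [lastPassage_of_not_le h, lastPassage_of_not_le (by omega)]
termination_by (B - A + (D - C) + 2).toNat

end lastPassage

/-- The point with light-cone coordinates `p = (x + t) / 2`, `q = (x - t) / 2`. -/
def lightCone (p q : ℤ) : BLPt := (p - q, p + q)

theorem fstPt_eNE (y : BLPt) : fstPt (eNE y) = y := rfl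

theorem sndPt_eSE (y : BLPt) : sndPt (eSE y) = y := by
  simp [sndPt, eSE]

theorem sndPt_eNE_lightCone (p q : ℤ) :
    sndPt (eNE (lightCone p q)) = lightCone (p + 1) q := by
  simp only [sndPt, eNE, lightCone, if_true, Prod.mk.injEq]
  omega

theorem fstPt_eSE_lightCone (p q : ℤ) :
    fstPt (eSE (lightCone p q)) = lightCone p (q - 1) := by
  simp only [fstPt, eSE, lightCone, Prod.mk.injEq]
  omega

theorem eSW_lightCone (p q : ℤ) : eSW (lightCone p q) = eNE (lightCone (p - 1) q) := by
  simp only [eSW, eNE, lightCone, Prod.mk.injEq, and_true]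
  omega

theorem eNW_lightCone (p q : ℤ) : eNW (lightCone p q) = eSE (lightCone p (q + 1)) := by
  simp only [eNW, eSE, lightCone, Prod.mk.injEq, and_true]
  omega

theorem fstPt_mem_bar_of_sndPt_mem {S : Set BLPt} {e : BLEdge} (h : sndPt e ∈ S) :
    fstPt e ∈ bar S := by
  refine Or.inr ⟨sndPt e, h, ?_⟩
  obtain ⟨⟨t, x⟩, _ | _⟩ := e <;> simp [fstPt, sndPt]

theorem fstPt_mem_bdry_iff {S : Set BLPt} {e : BLEdge} (h : sndPt e ∈ S) :
    fstPt e ∈ bdry S ↔ fstPt e ∉ S :=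
  ⟨And.right, fun h' => ⟨fstPt_mem_bar_of_sndPt_mem h, h'⟩⟩

/-- `S` is the rectangle `[A, B] × [C, D]` in light-cone coordinates. -/
def IsLightConeRect (S : Set BLPt) (A B C D : ℤ) : Prop :=
  ∀ y : BLPt, y ∈ S ↔ (y.1 + y.2) % 2 = 0 ∧
    2 * A ≤ y.2 + y.1 ∧ y.2 + y.1 ≤ 2 * B ∧ 2 * C ≤ y.2 - y.1 ∧ y.2 - y.1 ≤ 2 * D

theorem IsRectDomain.exists_isLightConeRect {S : Set BLPt} (hS : IsRectDomain S) :
    ∃ A B C D, A ≤ B ∧ C ≤ D ∧ IsLightConeRect S A B C D := by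
  obtain ⟨⟨y, hy⟩, a, b, c, d, rfl⟩ := hS
  refine ⟨(a + 1) / 2, b / 2, (c + 1) / 2, d / 2, ?_, ?_, fun z => ?_⟩ <;>
    simp only [Set.mem_ofPred_eq] at hy ⊢ <;> omega

theorem IsLightConeRect.image_neg_fst {S : Set BLPt} {A B C D : ℤ}
    (hS : IsLightConeRect S A B C D) :
    IsLightConeRect ((fun y : BLPt => (-y.1, y.2)) '' S) C D A B := by
  intro y
  constructor
  · rintro ⟨z, hz, rfl⟩
    have := (hS z).1 hz
    dsimp only
    omega
  · intro h
    exact ⟨(-y.1, y.2), (hS _).2 (by omega), by simp⟩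

section IsLightConeRect

variable {S : Set BLPt} {A B C D : ℤ} {ξ : BLPt → ℝ} {η : BLEdge → ℝ} {w : ℤ → ℤ → ℝ}

theorem IsLightConeRect.lightCone_mem_iff (hS : IsLightConeRect S A B C D) {p q : ℤ} :
    lightCone p q ∈ S ↔ A ≤ p ∧ p ≤ B ∧ C ≤ q ∧ q ≤ D := by
  rw [hS, lightCone]
  omega

theorem IsLightConeRect.flow_eNE_left (hS : IsLightConeRect S A B C D)
    (hzb : ZeroLeftBoundary S η) {q : ℤ} (hq : lightCone A q ∈ S) :
    η (eNE (lightCone (A - 1) q)) = 0 := by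
  refine hzb _ (Or.inr ⟨?_, ?_, ?_⟩)
  · rwa [sndPt_eNE_lightCone, sub_add_cancel]
  · rw [fstPt_eNE, hS.lightCone_mem_iff]
    omega
  · rw [fstPt_eNE, sndPt_eNE_lightCone, lightCone, lightCone]
    omega

theorem IsLightConeRect.flow_eSE_top (hS : IsLightConeRect S A B C D)
    (hzb : ZeroLeftBoundary S η) {p : ℤ} (hp : lightCone p D ∈ S) :
    η (eSE (lightCone p (D + 1))) = 0 := by
  refine hzb _ (Or.inl ⟨?_, ?_, ?_⟩)
  · rwa [fstPt_eSE_lightCone, add_sub_cancel_right]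
  · rw [sndPt_eSE, hS.lightCone_mem_iff]
    omega
  · rw [fstPt_eSE_lightCone, sndPt_eSE, lightCone, lightCone]
    omega

/-- With zero left boundary data, the flow field is the discrete gradient of the last passage
value from the leftmost corner. -/
theorem IsLightConeRect.flow_eq_lastPassage_sub (hS : IsLightConeRect S A B C D)
    (hzb : ZeroLeftBoundary S η) (hrec : BirthRecursion S η ξ)
    (hw : ∀ p q, lightCone p q ∈ S → w p q = ξ (lightCone p q))
    (p q : ℤ) (hp : A ≤ p ∧ p ≤ B) (hq : C ≤ q ∧ q ≤ D) :
    η (eNE (lightCone p q)) = lastPassage w A p q D - lastPassage w A p (q + 1) D ∧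
      η (eSE (lightCone p q)) = lastPassage w A p q D - lastPassage w A (p - 1) q D := by
  have hmem : lightCone p q ∈ S := hS.lightCone_mem_iff.2 ⟨hp.1, hp.2, hq.1, hq.2⟩
  have hSW : η (eSW (lightCone p q)) =
      lastPassage w A (p - 1) q D - lastPassage w A (p - 1) (q + 1) D := by
    rw [eSW_lightCone]
    rcases hp.1.eq_or_lt with rfl | hAp
    · rw [hS.flow_eNE_left hzb hmem, lastPassage_of_not_le (by omega),
        lastPassage_of_not_le (by omega), sub_zero]
    · exact (hS.flow_eq_lastPassage_sub hzb hrec hw (p - 1) q ⟨by omega, by omega⟩ hq).1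
  have hNW : η (eNW (lightCone p q)) =
      lastPassage w A p (q + 1) D - lastPassage w A (p - 1) (q + 1) D := by
    rw [eNW_lightCone]
    rcases hq.2.eq_or_lt with rfl | hqD
    · rw [hS.flow_eSE_top hzb hmem, lastPassage_of_not_le (by omega),
        lastPassage_of_not_le (by omega), sub_zero]
    · exact (hS.flow_eq_lastPassage_sub hzb hrec hw p (q + 1) hp ⟨by omega, by omega⟩).2
  have max_sub_zero (a b : ℝ) : max (a - b) 0 = max a b - b := by
    rw [← max_sub_sub_right, sub_self]
  obtain ⟨hNE, hSE⟩ := hrec _ hmem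
  rw [hSW, hNW, sub_sub_sub_cancel_right, max_sub_zero] at hNE hSE
  rw [hNE, hSE, lastPassage_of_le hp.1 hq.2, hw p q hmem,
    max_comm (lastPassage w A p (q + 1) D)]
  constructor <;> ring
termination_by (p - A + (D - q)).toNat
decreasing_by all_goals omega

/-- The `e^SW` edges entering `S` from below are left-boundary edges, hence carry no flow. -/
theorem IsLightConeRect.crossing_inter_support (hS : IsLightConeRect S A B C D)
    (hCD : C ≤ D) (hzb : ZeroLeftBoundary S η) :
    {e : BLEdge | sndPt e ∈ S ∧ fstPt e ∈ bdry S} ∩ Function.support η =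
      (fun n : ℕ => eSE (lightCone (A + n) C)) '' ↑(Finset.range (B - A + 1).toNat) ∩
        Function.support η := by
  ext e
  refine and_congr_left fun hne => ⟨fun ⟨hsnd, hfst⟩ => ?_, ?_⟩
  · rw [fstPt_mem_bdry_iff hsnd] at hfst
    obtain ⟨⟨t, x⟩, _ | _⟩ := e
    · have hin := (hS _).1 hsnd
      have hout := (hS _).not.1 hfst
      simp only [sndPt, fstPt, Bool.false_eq_true, if_false] at hin hout
      refine ⟨((x + t) / 2 - A).toNat, by simp only [Finset.coe_range, Set.mem_Iio]; omega, ?_⟩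
      simp only [eSE, lightCone, Prod.mk.injEq, and_true]
      omega
    · exact absurd (hzb _ (Or.inr ⟨hsnd, hfst, by simp [fstPt, sndPt]⟩)) hne
  · rintro ⟨n, hn, rfl⟩
    have hin : lightCone (A + n) C ∈ S := by
      rw [hS.lightCone_mem_iff]
      simp only [Finset.coe_range, Set.mem_Iio] at hn
      omega
    refine ⟨by rwa [sndPt_eSE], (fstPt_mem_bdry_iff (by rwa [sndPt_eSE])).2 ?_⟩
    rw [fstPt_eSE_lightCone, hS.lightCone_mem_iff]
    omega

theorem IsLightConeRect.finsum_crossing_eq_lastPassage (hS : IsLightConeRect S A B C D)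
    (hAB : A ≤ B) (hCD : C ≤ D) (hzb : ZeroLeftBoundary S η) (hrec : BirthRecursion S η ξ)
    (hw : ∀ p q, lightCone p q ∈ S → w p q = ξ (lightCone p q)) :
    ∑ᶠ e ∈ {e : BLEdge | sndPt e ∈ S ∧ fstPt e ∈ bdry S}, η e = lastPassage w A B C D := by
  have hinj : Set.InjOn (fun n : ℕ => eSE (lightCone (A + n) C))
      ↑(Finset.range (B - A + 1).toNat) := by
    intro m _ n _ h
    simp only [eSE, lightCone, Prod.mk.injEq] at h
    omega
  have hstep : ∀ n ∈ Finset.range (B - A + 1).toNat, η (eSE (lightCone (A + n) C)) =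
      lastPassage w A (A + (n + 1 : ℕ) - 1) C D - lastPassage w A (A + n - 1) C D := by
    intro n hn
    rw [Finset.mem_range] at hn
    rw [(hS.flow_eq_lastPassage_sub hzb hrec hw (A + n) C ⟨by omega, by omega⟩
      ⟨le_rfl, hCD⟩).2]
    push_cast
    ring_nf
  rw [finsum_mem_inter_support_eq _ _ _ (hS.crossing_inter_support hCD hzb),
    finsum_mem_image hinj, finsum_mem_coe_finset, Finset.sum_congr rfl hstep,
    Finset.sum_range_sub (fun n : ℕ => lastPassage w A (A + n - 1) C D),
    lastPassage_of_not_le (by omega : ¬(A ≤ A + ((0 : ℕ) : ℤ) - 1 ∧ C ≤ D)), sub_zero]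
  congr
  omega

end IsLightConeRect

end BL

open BL in
theorem total_weight_time_reflection_general (S : Set BLPt) (hS : IsRectDomain S)
    (ξ ξ' : BLPt → ℝ) (hξ0 : ∀ y ∈ S, 0 ≤ ξ y)
    (S' : Set BLPt) (hS' : S' = (fun y : BLPt => (-y.1, y.2)) '' S)
    (hξ' : ∀ y : BLPt, ξ' y = ξ (-y.1, y.2))
    (η η' : BLEdge → ℝ)
    (hzb : ZeroLeftBoundary S η) (hrec : BirthRecursion S η ξ)
    (hzb' : ZeroLeftBoundary S' η')
    (hrec' : BirthRecursion S' η' ξ') :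
    (∑ᶠ e ∈ {e : BLEdge | sndPt e ∈ S ∧ fstPt e ∈ bdry S}, η e) =
      (∑ᶠ e ∈ {e : BLEdge | sndPt e ∈ S' ∧ fstPt e ∈ bdry S'}, η' e) := by
  obtain ⟨A, B, C, D, hAB, hCD, hrect⟩ := hS.exists_isLightConeRect
  have hrect' : IsLightConeRect S' C D A B := hS' ▸ hrect.image_neg_fst
  -- clipping at `0` changes `w` only off the rectangle, where `lastPassage` never reads it
  set w : ℤ → ℤ → ℝ := fun p q => max (ξ (lightCone p q)) 0
  have hw : ∀ p q, lightCone p q ∈ S → w p q = ξ (lightCone p q) :=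
    fun p q h => max_eq_left (hξ0 _ h)
  have hw' : ∀ p q, lightCone p q ∈ S' → Function.swap w p q = ξ' (lightCone p q) := by
    intro p q h
    have hξ'pq : ξ' (lightCone p q) = ξ (lightCone q p) := by
      rw [hξ', lightCone, lightCone, neg_sub, add_comm]
    rw [hξ'pq, Function.swap, hw q p (hrect.lightCone_mem_iff.2 ?_)]
    have := hrect'.lightCone_mem_iff.1 h
    omega
  rw [hrect.finsum_crossing_eq_lastPassage hAB hCD hzb hrec hw,
    hrect'.finsum_crossing_eq_lastPassage hCD hAB hzb' hrec' hw']
  exact lastPassage_swap (fun p q => le_max_right _ _) A B C D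

open BL in
/-- **Time-reflection symmetry of the total broken-line weight:** let `S` be a
rectangular domain, `ξ ≥ 0` a birth field on `S`, `S' = M(S)` with `M(t,x) = (−t,x)`
and `ξ'(t,x) = ξ(−t,x)`. If `η` (resp. `η'`) is the flow field on `ℰ(S̄)` (resp.
`ℰ(S̄')`) with zero boundary conditions and births `ξ` (resp. `ξ'`), then
`H_S(ξ) = H_{S'}(ξ')`. -/
theorem total_weight_time_reflection (S : Set BLPt) (hS : IsRectDomain S)
    (ξ ξ' : BLPt → ℝ) (hξ0 : ∀ y ∈ S, 0 ≤ ξ y)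
    (S' : Set BLPt) (hS' : S' = (fun y : BLPt => (-y.1, y.2)) '' S)
    (hξ' : ∀ y : BLPt, ξ' y = ξ (-y.1, y.2))
    (η η' : BLEdge → ℝ)
    (hη : IsFlowField S η) (hzb : ZeroLeftBoundary S η) (hrec : BirthRecursion S η ξ)
    (hη' : IsFlowField S' η') (hzb' : ZeroLeftBoundary S' η')
    (hrec' : BirthRecursion S' η' ξ') :
    (∑ᶠ e ∈ {e : BLEdge | sndPt e ∈ S ∧ fstPt e ∈ bdry S}, η e) =
      (∑ᶠ e ∈ {e : BLEdge | sndPt e ∈ S' ∧ fstPt e ∈ bdry S'}, η' e) :=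
  total_weight_time_reflection_general S hS ξ ξ' hξ0 S' hS' hξ' η η' hzb hrec hzb' hrec'
end
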